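/- If 2 < a < b, then the automorphism group of C₀(a,b), namely the group of coordinate permutations of {1,…,a}×{1,…,b} preserving C₀(a,b), is exactly the image of Sym(a) × Sym(b) acting via (i,j)^(σ,τ) = (i^σ, j^τ). -/

import Mathlib

/-- The elementary row matrix `r_i`: 1's exactly in row `i`. -/
def rowMat (a b : ℕ) (i : Fin a) : Matrix (Fin a) (Fin b) (ZMod 2) :=
  fun i' _ => if i' = i then 1 else 0

/-- The elementary column matrix `c_j`: 1's exactly in column `j`. -/
def colMat (a b : ℕ) (j : Fin b) : Matrix (Fin a) (Fin b) (ZMod 2) :=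
  fun _ j' => if j' = j then 1 else 0

/-- The code `C₀(a,b)`, spanned by the elementary row and column matrices. -/
def C0 (a b : ℕ) : Submodule (ZMod 2) (Matrix (Fin a) (Fin b) (ZMod 2)) :=
  Submodule.span (ZMod 2) (Set.range (rowMat a b) ∪ Set.range (colMat a b))

/-!
A matrix lies in `C₀` iff it has the form `x i + y j`, so all its rectangle sums
`M i j + M i j' + M i' j + M i' j'` vanish. Testing an automorphism `φ` against the row and column
matrices shows that the images of the four corners of a rectangle have their rows, and their
columns, paired up. If `φ (i, j)` and `φ (i, j')` lay in different rows and columns, every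
`φ (i', j)` with `i' ≠ i` would be one of the two remaining corners of their rectangle, and so
would `φ (i', j')`; with `a ≥ 3` rows this contradicts injectivity. Hence each row is mapped
into a single line, which is a row because a column has only `a < b` points, and the same pairing
argument then sends columns into columns.
-/

lemma mem_C0_iff {a b : ℕ} (M : Matrix (Fin a) (Fin b) (ZMod 2)) :
    M ∈ C0 a b ↔ ∃ (x : Fin a → ZMod 2) (y : Fin b → ZMod 2), ∀ i j, M i j = x i + y j := by
  constructor
  · intro hM
    induction hM using Submodule.span_induction with
    | mem v hv =>
      rcases hv with ⟨i₀, rfl⟩ | ⟨j₀, rfl⟩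
      · exact ⟨fun i => if i = i₀ then 1 else 0, 0, fun i j => by simp [rowMat]⟩
      · exact ⟨0, fun j => if j = j₀ then 1 else 0, fun i j => by simp [colMat]⟩
    | zero => exact ⟨0, 0, fun i j => by simp⟩
    | add u v _ _ hu hv =>
      obtain ⟨x₁, y₁, h₁⟩ := hu
      obtain ⟨x₂, y₂, h₂⟩ := hv
      exact ⟨x₁ + x₂, y₁ + y₂, fun i j => by
        simp only [Matrix.add_apply, h₁, h₂, Pi.add_apply]; ring⟩
    | smul c v _ hv =>
      obtain ⟨x, y, h⟩ := hv
      exact ⟨c • x, c • y, fun i j => by simp [h, mul_add]⟩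
  · rintro ⟨x, y, h⟩
    have hM : M = ∑ i, x i • rowMat a b i + ∑ j, y j • colMat a b j := by
      ext i j
      simp [Matrix.sum_apply, rowMat, colMat, h i j]
    rw [hM]
    refine add_mem (sum_mem fun i _ => Submodule.smul_mem _ _ ?_)
      (sum_mem fun j _ => Submodule.smul_mem _ _ ?_)
    · exact Submodule.subset_span (Or.inl ⟨i, rfl⟩)
    · exact Submodule.subset_span (Or.inr ⟨j, rfl⟩)

lemma rectangle_sum_eq_zero_of_mem_C0 {a b : ℕ} {M : Matrix (Fin a) (Fin b) (ZMod 2)}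
    (hM : M ∈ C0 a b) (i i' : Fin a) (j j' : Fin b) :
    M i j + M i j' + M i' j + M i' j' = 0 := by
  obtain ⟨x, y, h⟩ := (mem_C0_iff M).1 hM
  have two : (2 : ZMod 2) = 0 := rfl
  rw [h, h, h, h]
  linear_combination (x i + x i' + y j + y j') * two

lemma eq_or_eq_of_indicator_sum_eq_zero {γ : Type*} [DecidableEq γ] {w x y z : γ}
    (h : ∀ r, (if w = r then (1 : ZMod 2) else 0) + (if x = r then 1 else 0)
      + (if y = r then 1 else 0) + (if z = r then 1 else 0) = 0)
    (hwx : w ≠ x) : y = w ∨ y = x := by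
  by_contra! hy
  have hw := h w
  have hy' := h y
  grind

lemma exists_ne_ne_of_two_lt_card {α : Type*} [Fintype α] [DecidableEq α]
    (h : 2 < Fintype.card α) (x : α) : ∃ y z, y ≠ x ∧ z ≠ x ∧ y ≠ z := by
  obtain ⟨y, hy, z, hz, hyz⟩ := (Finset.one_lt_card (s := Finset.univ.erase x)).mp
    (by rw [Finset.card_erase_of_mem (Finset.mem_univ x), Finset.card_univ]; omega)
  exact ⟨y, z, Finset.ne_of_mem_erase hy, Finset.ne_of_mem_erase hz, hyz⟩

lemma forall_fst_eq_or_forall_snd_eq {ι α β : Type*} {g : ι → α × β}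
    (h : ∀ j j', (g j).1 = (g j').1 ∨ (g j).2 = (g j').2) :
    (∀ j j', (g j).1 = (g j').1) ∨ (∀ j j', (g j).2 = (g j').2) := by
  by_contra! hne
  obtain ⟨⟨j₀, j₁, h₀₁⟩, ⟨k, k', hk⟩⟩ := hne
  have hsnd₀₁ : (g j₀).2 = (g j₁).2 := (h j₀ j₁).resolve_left h₀₁
  have hsnd : ∀ l, (g l).2 = (g j₀).2 := fun l => by
    by_contra hl
    have h₀ : (g l).1 = (g j₀).1 := (h l j₀).resolve_right hl
    have h₁ : (g l).1 = (g j₁).1 := (h l j₁).resolve_right (hsnd₀₁ ▸ hl)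
    exact h₀₁ (h₀.symm.trans h₁)
  exact hk ((hsnd k).trans (hsnd k').symm)

theorem Equiv.Perm.exists_prod_of_fst_snd {α β : Type*} [Finite α] [Finite β]
    [Nonempty α] [Nonempty β] (φ : Equiv.Perm (α × β))
    (hfst : ∀ i j j', (φ (i, j)).1 = (φ (i, j')).1)
    (hsnd : ∀ i i' j, (φ (i, j)).2 = (φ (i', j)).2) :
    ∃ (σ : Equiv.Perm α) (τ : Equiv.Perm β), ∀ p, φ p = (σ p.1, τ p.2) := by
  obtain ⟨i₀⟩ := ‹Nonempty α›
  obtain ⟨j₀⟩ := ‹Nonempty β›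
  have hσ : Function.Injective fun i => (φ (i, j₀)).1 := fun u v h =>
    congrArg Prod.fst (φ.injective (Prod.ext h (hsnd u v j₀)))
  have hτ : Function.Injective fun j => (φ (i₀, j)).2 := fun u v h =>
    congrArg Prod.snd (φ.injective (Prod.ext (hfst i₀ u v) h))
  exact ⟨.ofBijective _ hσ.bijective_of_finite, .ofBijective _ hτ.bijective_of_finite,
    fun ⟨i, j⟩ => Prod.ext (hfst i j j₀) (hsnd i i₀ j)⟩

def PreservesC0 (a b : ℕ) (φ : Equiv.Perm (Fin a × Fin b)) : Prop :=
  ∀ M ∈ C0 a b, (fun i j => M (φ (i, j)).1 (φ (i, j)).2) ∈ C0 a b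

lemma preservesC0_of_apply_eq_prod {a b : ℕ} {φ : Equiv.Perm (Fin a × Fin b)}
    {σ : Equiv.Perm (Fin a)} {τ : Equiv.Perm (Fin b)} (h : ∀ p, φ p = (σ p.1, τ p.2)) :
    PreservesC0 a b φ := by
  intro M hM
  obtain ⟨x, y, hxy⟩ := (mem_C0_iff M).1 hM
  exact (mem_C0_iff _).2 ⟨x ∘ σ, y ∘ τ, fun i j => by simp [h, hxy]⟩

namespace PreservesC0

variable {a b : ℕ} {φ : Equiv.Perm (Fin a × Fin b)}

lemma fst_eq_or (hφ : PreservesC0 a b φ) {i i' : Fin a} {j j' : Fin b}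
    (h : (φ (i, j)).1 ≠ (φ (i, j')).1) :
    (φ (i', j)).1 = (φ (i, j)).1 ∨ (φ (i', j)).1 = (φ (i, j')).1 := by
  refine eq_or_eq_of_indicator_sum_eq_zero (z := (φ (i', j')).1) (fun r => ?_) h
  have hr := hφ (rowMat a b r) (Submodule.subset_span (Or.inl ⟨r, rfl⟩))
  simpa [rowMat] using rectangle_sum_eq_zero_of_mem_C0 hr i i' j j'

lemma snd_eq_or (hφ : PreservesC0 a b φ) {i i' : Fin a} {j j' : Fin b}
    (h : (φ (i, j)).2 ≠ (φ (i, j')).2) :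
    (φ (i', j)).2 = (φ (i, j)).2 ∨ (φ (i', j)).2 = (φ (i, j')).2 := by
  refine eq_or_eq_of_indicator_sum_eq_zero (z := (φ (i', j')).2) (fun c => ?_) h
  have hc := hφ (colMat a b c) (Submodule.subset_span (Or.inr ⟨c, rfl⟩))
  simpa [colMat] using rectangle_sum_eq_zero_of_mem_C0 hc i i' j j'

lemma apply_eq_or (hφ : PreservesC0 a b φ) {i i' : Fin a} {j j' : Fin b} (hi : i' ≠ i)
    (h₁ : (φ (i, j)).1 ≠ (φ (i, j')).1) (h₂ : (φ (i, j)).2 ≠ (φ (i, j')).2) :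
    φ (i', j) = ((φ (i, j)).1, (φ (i, j')).2) ∨ φ (i', j) = ((φ (i, j')).1, (φ (i, j)).2) := by
  have hne : ∀ {k}, φ (i', j) ≠ φ (i, k) := fun h => hi (congrArg Prod.fst (φ.injective h))
  rcases hφ.fst_eq_or (i' := i') h₁ with e₁ | e₁ <;>
    rcases hφ.snd_eq_or (i' := i') h₂ with e₂ | e₂
  · exact absurd (Prod.ext e₁ e₂) hne
  · exact .inl (Prod.ext e₁ e₂)
  · exact .inr (Prod.ext e₁ e₂)
  · exact absurd (Prod.ext e₁ e₂) hne

lemma fst_eq_or_snd_eq (hφ : PreservesC0 a b φ) (ha : 2 < a) (i : Fin a) (j j' : Fin b) :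
    (φ (i, j)).1 = (φ (i, j')).1 ∨ (φ (i, j)).2 = (φ (i, j')).2 := by
  by_contra! ⟨h₁, h₂⟩
  have hj : j ≠ j' := by rintro rfl; exact h₁ rfl
  obtain ⟨i₁, i₂, hi₁, hi₂, hi₁₂⟩ := exists_ne_ne_of_two_lt_card (by simpa using ha) i
  -- `φ (i₁, j)`, `φ (i₂, j)`, `φ (i₁, j')` would be three distinct points among two corners
  have d₁₂ : φ (i₁, j) ≠ φ (i₂, j) := φ.injective.ne (by simp [hi₁₂])
  have d₁₃ : φ (i₁, j) ≠ φ (i₁, j') := φ.injective.ne (by simp [hj])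
  have d₂₃ : φ (i₂, j) ≠ φ (i₁, j') := φ.injective.ne (by simp [hi₁₂.symm])
  rcases hφ.apply_eq_or hi₁ h₁ h₂ with e₁ | e₁ <;>
    rcases hφ.apply_eq_or hi₂ h₁ h₂ with e₂ | e₂ <;>
    rcases hφ.apply_eq_or hi₁ h₁.symm h₂.symm with e₃ | e₃ <;>
    simp only [e₁, e₂, e₃, ne_eq, not_true_eq_false] at d₁₂ d₁₃ d₂₃

lemma fst_eq (hφ : PreservesC0 a b φ) (ha : 2 < a) (hab : a < b) (i : Fin a) (j j' : Fin b) :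
    (φ (i, j)).1 = (φ (i, j')).1 := by
  refine (forall_fst_eq_or_forall_snd_eq (hφ.fst_eq_or_snd_eq ha i)).resolve_right
    (fun hsnd => ?_) j j'
  have hinj : Function.Injective fun j => (φ (i, j)).1 := fun u v h =>
    congrArg Prod.snd (φ.injective (Prod.ext h (hsnd u v)))
  exact hab.not_ge (by simpa using Fintype.card_le_of_injective _ hinj)

lemma snd_eq (hφ : PreservesC0 a b φ) (hb : 2 < b)
    (hfst : ∀ i j j', (φ (i, j)).1 = (φ (i, j')).1) (i i' : Fin a) (j : Fin b) :
    (φ (i, j)).2 = (φ (i', j)).2 := by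
  by_contra hne
  have hcol : ∀ k ≠ j, (φ (i, k)).2 = (φ (i', j)).2 := fun k hk => by
    have hdiff : (φ (i, j)).2 ≠ (φ (i, k)).2 := fun h =>
      hk (congrArg Prod.snd (φ.injective (Prod.ext (hfst i j k) h))).symm
    exact ((hφ.snd_eq_or (i' := i') hdiff).resolve_left (Ne.symm hne)).symm
  obtain ⟨j₁, j₂, hj₁, hj₂, hj₁₂⟩ := exists_ne_ne_of_two_lt_card (by simpa using hb) j
  exact hj₁₂ (congrArg Prod.snd (φ.injective
    (Prod.ext (hfst i j₁ j₂) ((hcol j₁ hj₁).trans (hcol j₂ hj₂).symm))))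

end PreservesC0

theorem aut_C0_direct_product (a b : ℕ) (ha : 2 < a) (hab : a < b) :
    ∀ φ : Equiv.Perm (Fin a × Fin b),
      (∀ M ∈ C0 a b, (fun i j => M (φ (i, j)).1 (φ (i, j)).2) ∈ C0 a b) ↔
        ∃ (σ : Equiv.Perm (Fin a)) (τ : Equiv.Perm (Fin b)),
          ∀ p : Fin a × Fin b, φ p = (σ p.1, τ p.2) := by
  intro φ
  refine ⟨fun hφ => ?_, fun ⟨σ, τ, h⟩ => preservesC0_of_apply_eq_prod h⟩
  have hfst := PreservesC0.fst_eq hφ ha hab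
  have hsnd := PreservesC0.snd_eq hφ (ha.trans hab) hfst
  have : Nonempty (Fin a) := ⟨⟨0, by omega⟩⟩
  have : Nonempty (Fin b) := ⟨⟨0, by omega⟩⟩
  exact φ.exists_prod_of_fst_snd hfst hsnd
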